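/- arXiv:1402.2005 — 4 statements merged into one kernel-verified Lean document; each statement's English description precedes it below -/
import Mathlib

section
/- For every integer t with |t| > 2, the polynomial P(x) = x^3 - (t^4-t)x^2 + (t^5-2t^2)x + 1 is irreducible over the rationals. -/
/-!
A cubic over a field is irreducible as soon as it has no root. By the integral root theorem a
rational root of `P` would be an integer dividing the constant term `1`, i.e. `±1`. But
`P(1) = t (t⁴ - t³ - 2t + 1) + 2` and `P(-1) = -t (t (t³ + t² - 2) - 1)`, so a vanishing `P(±1)`
would force `t ∣ 2` or `t ∣ 1`, impossible when `|t| > 2`.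
-/

open Polynomial

theorem Polynomial.Monic.irreducible_map_of_forall_dvd_coeff_zero
    {A K : Type*} [CommRing A] [IsDomain A] [UniqueFactorizationMonoid A] [Field K] [Algebra A K]
    [IsFractionRing A K] {p : A[X]} (hp : p.Monic) (hp2 : 2 ≤ p.natDegree) (hp3 : p.natDegree ≤ 3)
    (hroot : ∀ r : A, r ∣ p.coeff 0 → p.eval r ≠ 0) :
    Irreducible (p.map (algebraMap A K)) := by
  have hinj := IsFractionRing.injective A K
  rw [← natDegree_map_eq_of_injective hinj] at hp2 hp3
  rw [(hp.map _).irreducible_iff_roots_eq_zero_of_degree_le_three hp2 hp3,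
    Multiset.eq_zero_iff_forall_notMem]
  intro x hx
  have hx0 : aeval x p = 0 := by
    rw [aeval_def, eval₂_eq_eval_map]
    exact isRoot_of_mem_roots hx
  obtain ⟨r, rfl, hr⟩ := exists_integer_of_is_root_of_monic hp hx0
  rw [aeval_algebraMap_apply, map_eq_zero_iff _ hinj] at hx0
  exact hroot r hr hx0

theorem Polynomial.Monic.irreducible_map_rat_of_coeff_zero_eq_one {p : ℤ[X]} (hp : p.Monic)
    (hp2 : 2 ≤ p.natDegree) (hp3 : p.natDegree ≤ 3) (h0 : p.coeff 0 = 1)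
    (h1 : p.eval 1 ≠ 0) (hm1 : p.eval (-1) ≠ 0) :
    Irreducible (p.map (Int.castRingHom ℚ)) := by
  refine hp.irreducible_map_of_forall_dvd_coeff_zero (K := ℚ) hp2 hp3 fun r hr => ?_
  rw [h0] at hr
  rcases Int.isUnit_iff.mp (isUnit_of_dvd_one hr) with rfl | rfl
  exacts [h1, hm1]

noncomputable def cubicF (t : ℤ) : ℤ[X] :=
  X ^ 3 - C (t ^ 4 - t) * X ^ 2 + C (t ^ 5 - 2 * t ^ 2) * X + 1

namespace cubicF

variable (t : ℤ)

theorem monic : (cubicF t).Monic := by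
  unfold cubicF; monicity!

theorem natDegree : (cubicF t).natDegree = 3 := by
  unfold cubicF; compute_degree!

theorem coeff_zero : (cubicF t).coeff 0 = 1 := by
  simp [cubicF, coeff_X]

theorem eval_one : (cubicF t).eval 1 = t * (t ^ 4 - t ^ 3 - 2 * t + 1) + 2 := by
  simp only [cubicF, eval_add, eval_sub, eval_mul, eval_pow, eval_C, eval_X, Polynomial.eval_one]
  ring

theorem eval_neg_one : (cubicF t).eval (-1) = -t * (t * (t ^ 3 + t ^ 2 - 2) + -1) := by
  simp only [cubicF, eval_add, eval_sub, eval_mul, eval_pow, eval_C, eval_X, Polynomial.eval_one]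
  ring

theorem map_rat : (cubicF t).map (Int.castRingHom ℚ) =
    X ^ 3 - C ((t : ℚ) ^ 4 - t) * X ^ 2 + C ((t : ℚ) ^ 5 - 2 * t ^ 2) * X + 1 := by
  simp only [cubicF, Polynomial.map_add, Polynomial.map_sub, Polynomial.map_mul,
    Polynomial.map_pow, map_X, map_C, Polynomial.map_one, Int.coe_castRingHom]
  push_cast
  ring

end cubicF

theorem Int.natAbs_le_of_mul_add_eq_zero {t q c : ℤ} (hc : c ≠ 0) (h : t * q + c = 0) :
    t.natAbs ≤ c.natAbs :=
  Int.natAbs_le_of_dvd_ne_zero ⟨-q, by linarith⟩ hc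

theorem stmt4 (t : ℤ) (ht : 2 < |t|) :
    Irreducible (X^3 - C ((t:ℚ)^4 - t) * X^2 + C ((t:ℚ)^5 - 2*t^2) * X + 1 : ℚ[X]) := by
  have ht : 2 < t.natAbs := by rw [Int.abs_eq_natAbs] at ht; exact_mod_cast ht
  rw [← cubicF.map_rat]
  refine (cubicF.monic t).irreducible_map_rat_of_coeff_zero_eq_one
    (by norm_num [cubicF.natDegree]) (by norm_num [cubicF.natDegree]) (cubicF.coeff_zero t) ?_ ?_
  · rw [cubicF.eval_one]
    intro h
    have := Int.natAbs_le_of_mul_add_eq_zero two_ne_zero h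
    omega
  · rw [cubicF.eval_neg_one, mul_ne_zero_iff, neg_ne_zero]
    refine ⟨by rintro rfl; simp at ht, fun h => ?_⟩
    have := Int.natAbs_le_of_mul_add_eq_zero (by norm_num) h
    omega
end

section
/- For every integer t ≥ 10, the polynomial P(x) = x^3 - (t^4-t)x^2 + (t^5-2t^2)x + 1 has three distinct real roots θ1 < θ2 < θ3, satisfying -2/t^5 < θ1 < -1/t^5, t < θ2 < t + 2/t^5, and t^4 - 2t - 1/t^5 < θ3 < t^4 - 2t. -/
/-!
Since `P(x) = x (x - t) (x - (t⁴ - 2t)) + 1`, the cubic is a perturbation by `1` of one with the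
well separated roots `0 < t < t⁴ - 2t`. Hence `P(t) = P(t⁴ - 2t) = 1 > 0`, and evaluating `P`
at points displaced by `1/t⁵` or `2/t⁵` gives the opposite signs needed to isolate one root
near each of `0`, `t`, `t⁴ - 2t` by the intermediate value theorem.
-/

/-- The dehomogenised form `F_{3,t}(x, 1)`. -/
def F3 (t x : ℝ) : ℝ := x ^ 3 - (t ^ 4 - t) * x ^ 2 + (t ^ 5 - 2 * t ^ 2) * x + 1

lemma F3_eq (t x : ℝ) : F3 t x = x * (x - t) * (x - (t ^ 4 - 2 * t)) + 1 := by
  unfold F3; ring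

lemma continuous_F3 (t : ℝ) : Continuous (F3 t) := by
  unfold F3; fun_prop

lemma F3_self (t : ℝ) : F3 t t = 1 := by
  simp [F3_eq]

lemma F3_pow_four_sub (t : ℝ) : F3 t (t ^ 4 - 2 * t) = 1 := by
  simp [F3_eq]

lemma thousand_mul_pow_le {t : ℝ} (ht : 10 ≤ t) (k n : ℕ) (hkn : k + 3 ≤ n) :
    1000 * t ^ k ≤ t ^ n := by
  have h3 : (1000 : ℝ) ≤ t ^ 3 := by
    calc (1000 : ℝ) = 10 ^ 3 := by norm_num
      _ ≤ t ^ 3 := by gcongr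
  calc 1000 * t ^ k ≤ t ^ 3 * t ^ k := by gcongr
    _ = t ^ (k + 3) := by ring
    _ ≤ t ^ n := pow_le_pow_right₀ (by linarith) hkn

section Signs

variable {t : ℝ} (ht : 10 ≤ t)
include ht

lemma F3_neg_two_div_pow_five_neg : F3 t (-2 / t ^ 5) < 0 := by
  have h0 : 0 < t := by linarith
  have key : F3 t (-2 / t ^ 5) =
      (-t ^ 15 + 4 * t ^ 12 - 4 * t ^ 9 + 4 * t ^ 6 - 8) / t ^ 15 := by
    unfold F3; field_simp; ring
  rw [key]
  refine div_neg_of_neg_of_pos ?_ (by positivity)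
  linarith [thousand_mul_pow_le ht 12 15 le_rfl, thousand_mul_pow_le ht 6 12 (by norm_num),
    pow_pos h0 9, pow_pos h0 6]

lemma F3_neg_one_div_pow_five_pos : 0 < F3 t (-1 / t ^ 5) := by
  have h0 : 0 < t := by linarith
  have key : F3 t (-1 / t ^ 5) = (2 * t ^ 12 - t ^ 9 + t ^ 6 - 1) / t ^ 15 := by
    unfold F3; field_simp; ring
  rw [key]
  refine div_pos ?_ (by positivity)
  linarith [thousand_mul_pow_le ht 9 12 le_rfl, thousand_mul_pow_le ht 0 6 (by norm_num),
    pow_pos h0 9, pow_pos h0 6]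

lemma F3_add_two_div_pow_five_neg : F3 t (t + 2 / t ^ 5) < 0 := by
  have h0 : 0 < t := by linarith
  have key : F3 t (t + 2 / t ^ 5) =
      (-t ^ 15 + 6 * t ^ 12 - 4 * t ^ 9 + 16 * t ^ 6 + 8) / t ^ 15 := by
    unfold F3; field_simp; ring
  rw [key]
  refine div_neg_of_neg_of_pos ?_ (by positivity)
  linarith [thousand_mul_pow_le ht 12 15 le_rfl, thousand_mul_pow_le ht 6 12 (by norm_num),
    thousand_mul_pow_le ht 0 12 (by norm_num), pow_pos h0 9, pow_pos h0 6]

lemma F3_pow_four_sub_sub_one_div_pow_five_neg : F3 t (t ^ 4 - 2 * t - 1 / t ^ 5) < 0 := by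
  have h0 : 0 < t := by linarith
  have key : F3 t (t ^ 4 - 2 * t - 1 / t ^ 5) =
      (-t ^ 18 + 6 * t ^ 15 - 6 * t ^ 12 + 2 * t ^ 9 - 5 * t ^ 6 - 1) / t ^ 15 := by
    unfold F3; field_simp; ring
  rw [key]
  refine div_neg_of_neg_of_pos ?_ (by positivity)
  linarith [thousand_mul_pow_le ht 15 18 le_rfl, thousand_mul_pow_le ht 9 15 (by norm_num),
    pow_pos h0 12, pow_pos h0 9, pow_pos h0 6]

end Signs

theorem stmt5 (t : ℤ) (ht : 10 ≤ t) :
    ∃ θ1 θ2 θ3 : ℝ, θ1 < θ2 ∧ θ2 < θ3 ∧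
      (θ1^3 - ((t:ℝ)^4 - t)*θ1^2 + ((t:ℝ)^5 - 2*t^2)*θ1 + 1 = 0) ∧
      (θ2^3 - ((t:ℝ)^4 - t)*θ2^2 + ((t:ℝ)^5 - 2*t^2)*θ2 + 1 = 0) ∧
      (θ3^3 - ((t:ℝ)^4 - t)*θ3^2 + ((t:ℝ)^5 - 2*t^2)*θ3 + 1 = 0) ∧
      (-2/(t:ℝ)^5 < θ1 ∧ θ1 < -1/(t:ℝ)^5) ∧
      ((t:ℝ) < θ2 ∧ θ2 < t + 2/(t:ℝ)^5) ∧
      ((t:ℝ)^4 - 2*t - 1/(t:ℝ)^5 < θ3 ∧ θ3 < (t:ℝ)^4 - 2*t) := by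
  have hT : (10 : ℝ) ≤ t := by exact_mod_cast ht
  have hδ : 0 < 1 / (t : ℝ) ^ 5 := by positivity
  have hδ1 : 1 / (t : ℝ) ^ 5 ≤ 1 := (div_le_one (by positivity)).2 (one_le_pow₀ (by linarith))
  have hscale (c : ℝ) : c / (t : ℝ) ^ 5 = c * (1 / (t : ℝ) ^ 5) := by ring
  have hgap : 3 * (t : ℝ) + 3 ≤ t ^ 4 := by
    linarith [thousand_mul_pow_le hT 1 4 le_rfl, thousand_mul_pow_le hT 0 4 (by norm_num)]
  obtain ⟨θ1, ⟨h1l, h1r⟩, r1⟩ :=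
    intermediate_value_Ioo (by linarith [hscale (-1), hscale (-2)]) (continuous_F3 _).continuousOn
      ⟨F3_neg_two_div_pow_five_neg hT, F3_neg_one_div_pow_five_pos hT⟩
  obtain ⟨θ2, ⟨h2l, h2r⟩, r2⟩ :=
    intermediate_value_Ioo' (by linarith [hscale 2]) (continuous_F3 _).continuousOn
      ⟨F3_add_two_div_pow_five_neg hT, (F3_self (t : ℝ)).symm ▸ one_pos⟩
  obtain ⟨θ3, ⟨h3l, h3r⟩, r3⟩ :=
    intermediate_value_Ioo (by linarith) (continuous_F3 _).continuousOn
      ⟨F3_pow_four_sub_sub_one_div_pow_five_neg hT, (F3_pow_four_sub (t : ℝ)).symm ▸ one_pos⟩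
  exact ⟨θ1, θ2, θ3, by linarith [hscale (-1)], by linarith [hscale 2], r1, r2, r3,
    ⟨h1l, h1r⟩, ⟨h2l, h2r⟩, ⟨h3l, h3r⟩⟩
end

section
/- For every integer t ≥ 10, the real root θ1 of P(x) = x^3 - (t^4-t)x^2 + (t^5-2t^2)x + 1 lying in (-2/t^5, 0) satisfies θ1 = -1/t^5 - 2/t^8 - κ/t^11 for some real κ with 3 < κ < 3.1. -/
/-! On `x ≤ 0` the cubic is strictly increasing, because its coefficients `-(t⁴ - t)` of `x²`
and `t⁵ - 2t²` of `x` give a difference quotient `x² + xy + y² - (t⁴ - t)(x + y) + t⁵ - 2t²`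
that is positive there. So it suffices to check the sign of the cubic at the two candidate
approximations `-1/t⁵ - 2/t⁸ - κ/t¹¹` with `κ = 3` and `κ = 3.1`: after multiplying by `t³³`
these are polynomials in `u = t³` whose leading behaviour is `3u⁸` and `-u⁸(u - 32)/10`. -/

def cubic (T x : ℝ) : ℝ := x^3 - (T^4 - T)*x^2 + (T^5 - 2*T^2)*x + 1

noncomputable def approxRoot (T κ : ℝ) : ℝ := -1/T^5 - 2/T^8 - κ/T^11

lemma cubic_strictMonoOn_Iic {T : ℝ} (hT : 2 ≤ T^3) : StrictMonoOn (cubic T) (Set.Iic 0) := by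
  intro x hx y hy hxy
  rw [Set.mem_Iic] at hx hy
  have hT0 : 0 < T := Odd.pow_pos_iff (n := 3) (by decide) |>.mp (by linarith)
  have hT4 : 0 ≤ T^4 - T := by nlinarith
  have hT5 : 0 ≤ T^5 - 2*T^2 := by nlinarith [sq_nonneg T]
  have hxy0 : 0 ≤ x * y := mul_nonneg_of_nonpos_of_nonpos (hxy.le.trans hy) hy
  have hfactor : 0 < x^2 + x*y + y^2 + (T^4 - T)*(-(x + y)) + (T^5 - 2*T^2) := by
    have : 0 < x^2 := by nlinarith
    nlinarith [mul_nonneg hT4 (show 0 ≤ -(x + y) by linarith), sq_nonneg y]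
  have hdiff : cubic T y - cubic T x
      = (y - x) * (x^2 + x*y + y^2 + (T^4 - T)*(-(x + y)) + (T^5 - 2*T^2)) := by
    unfold cubic; ring
  nlinarith [mul_pos (sub_pos.mpr hxy) hfactor]

lemma cubic_approxRoot_three_pos {T : ℝ} (hT : 3 ≤ T^3) : 0 < cubic T (approxRoot T 3) := by
  have hT0 : 0 < T := Odd.pow_pos_iff (n := 3) (by decide) |>.mp (by linarith)
  have hexp : cubic T (approxRoot T 3) * T^33 = 3*(T^3)^8 - 6*(T^3)^7 - 3*(T^3)^6 - 3*(T^3)^5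
      - 12*(T^3)^4 - 44*(T^3)^3 - 63*(T^3)^2 - 54*(T^3) - 27 := by
    unfold cubic approxRoot; field_simp; ring
  -- in `v = T³ - 3` every coefficient is positive
  obtain ⟨v, hv, hvT⟩ : ∃ v, 0 ≤ v ∧ T^3 = v + 3 := ⟨T^3 - 3, by linarith, by ring⟩
  have : 0 < cubic T (approxRoot T 3) * T^33 := by rw [hexp, hvT]; ring_nf; positivity
  exact pos_of_mul_pos_left this (by positivity)

lemma cubic_approxRoot_three_point_one_neg {T : ℝ} (hT : 32 ≤ T^3) :
    cubic T (approxRoot T 3.1) < 0 := by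
  have hT0 : 0 < T := Odd.pow_pos_iff (n := 3) (by decide) |>.mp (by linarith)
  have hexp : cubic T (approxRoot T 3.1) * (1000 * T^33) = -100*(T^3)^9 + 3200*(T^3)^8
      - 6200*(T^3)^7 - 3200*(T^3)^6 - 3210*(T^3)^5 - 11690*(T^3)^4 - 45200*(T^3)^3
      - 66030*(T^3)^2 - 57660*(T^3) - 29791 := by
    unfold cubic approxRoot; norm_num; field_simp; ring
  -- in `v = T³ - 32` every coefficient is negative
  obtain ⟨v, hv, hvT⟩ : ∃ v, 0 ≤ v ∧ T^3 = v + 32 := ⟨T^3 - 32, by linarith, by ring⟩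
  have : 0 < -(cubic T (approxRoot T 3.1) * (1000 * T^33)) := by
    rw [hexp, hvT]; ring_nf; positivity
  nlinarith [pow_pos hT0 33]

lemma approxRoot_strictAnti {T : ℝ} (hT : 0 < T) : StrictAnti (approxRoot T) := by
  intro κ κ' h
  unfold approxRoot
  gcongr

lemma approxRoot_surjective {T : ℝ} (hT : T ≠ 0) : Function.Surjective (approxRoot T) :=
  fun θ => ⟨(-1/T^5 - 2/T^8 - θ) * T^11, by unfold approxRoot; field_simp; ring⟩

lemma approxRoot_neg {T κ : ℝ} (hT : 0 < T) (hκ : 0 ≤ κ) : approxRoot T κ < 0 := by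
  unfold approxRoot
  have : 0 < 1/T^5 + 2/T^8 + κ/T^11 := by positivity
  linarith [neg_div (T^5) 1, neg_div (T^8) 2]

theorem stmt6_general (t : ℤ) (ht : 10 ≤ t) (θ1 : ℝ)
    (h2 : θ1 < 0)
    (hroot : θ1^3 - ((t:ℝ)^4 - t)*θ1^2 + ((t:ℝ)^5 - 2*t^2)*θ1 + 1 = 0) :
    ∃ κ : ℝ, 3 < κ ∧ κ < 3.1 ∧ θ1 = -1/(t:ℝ)^5 - 2/(t:ℝ)^8 - κ/(t:ℝ)^11 := by
  have hT : (10 : ℝ) ≤ t := by exact_mod_cast ht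
  have hT3 : (1000 : ℝ) ≤ (t : ℝ)^3 := by nlinarith
  have hθ : cubic t θ1 = 0 := hroot
  have hmono := cubic_strictMonoOn_Iic (T := t) (by linarith)
  have hlow : approxRoot t 3.1 < θ1 :=
    (hmono.lt_iff_lt (approxRoot_neg (by linarith) (by norm_num)).le h2.le).mp
      (hθ ▸ cubic_approxRoot_three_point_one_neg (by linarith))
  have hup : θ1 < approxRoot t 3 :=
    (hmono.lt_iff_lt h2.le (approxRoot_neg (by linarith) (by norm_num)).le).mp
      (hθ ▸ cubic_approxRoot_three_pos (by linarith))
  obtain ⟨κ, rfl⟩ := approxRoot_surjective (T := t) (by positivity) θ1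
  have hanti := approxRoot_strictAnti (T := t) (by linarith)
  exact ⟨κ, hanti.lt_iff_gt.mp hup, hanti.lt_iff_gt.mp hlow, rfl⟩

theorem stmt6 (t : ℤ) (ht : 10 ≤ t) (θ1 : ℝ)
    (h1 : -2/(t:ℝ)^5 < θ1) (h2 : θ1 < 0)
    (hroot : θ1^3 - ((t:ℝ)^4 - t)*θ1^2 + ((t:ℝ)^5 - 2*t^2)*θ1 + 1 = 0) :
    ∃ κ : ℝ, 3 < κ ∧ κ < 3.1 ∧ θ1 = -1/(t:ℝ)^5 - 2/(t:ℝ)^8 - κ/(t:ℝ)^11 :=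
  stmt6_general t ht θ1 h2 hroot
end

section
/- For every integer t ≥ 10, if (x,y) is an integer solution of x^3 - (t^4-t)x^2y + (t^5-2t^2)xy^2 + y^3 = 1 with |y| ≥ 2, then the rational number x/y lies in one of the three disjoint open intervals I1 = (-1.13/t^5, (-1 + 1/|y|^3)/t^5), I2 = (t + (1 - 1/|y|^3)/t^5, t + 1.13/t^5), I3 = (t^4 - 2t - 1.13/t^8, t^4 - 2t - (1 - 1/|y|^3)/t^8). -/
/-!
At `r = x / y` the form dehomogenises as `F_{3,t}(r, 1) = r (r - t) (r - (t^4 - 2t)) + 1`, and a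
solution has `F_{3,t}(r, 1) = 1 / y^3`, of absolute value at most `1/8`. Elementary bounds on the
product `r (r - t) (r - (t^4 - 2t))` show that outside the three intervals `F_{3,t}(r, 1)` is either
above `1/|y|^3` or below `-1/8`, except on the stretch of length `1/2` to the left of `t^4 - 2t`,
where it is only below `-1/27`. That settles `|y| ≥ 3`; for `|y| = 2` the fraction `r`, being
different from the integer `t^4 - 2t`, lies at distance at least `1/2` from it.
-/

open Set

def thueForm (T r : ℝ) : ℝ := r * (r - T) * (r - (T^4 - 2*T)) + 1

lemma thueForm_div (T : ℝ) {x y : ℝ} (hy : y ≠ 0) :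
    thueForm T (x / y) = (x^3 - (T^4 - T)*x^2*y + (T^5 - 2*T^2)*x*y^2 + y^3) / y^3 := by
  unfold thueForm
  field_simp
  ring

lemma neg_lt_mul_of_le_div {a b e K : ℝ} (hK : 0 < K) (he : 0 < e) (ha₀ : 0 ≤ a)
    (ha : a ≤ e / K) (hb : -K < b) : -e < a * b := by
  rcases le_or_gt 0 b with hb₀ | hb₀
  · nlinarith [mul_nonneg ha₀ hb₀]
  · calc -e = e / K * -K := by field_simp
      _ < e / K * b := by gcongr
      _ ≤ a * b := mul_le_mul_of_nonpos_right ha hb₀.le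

lemma Int.one_div_abs_le_abs_div_sub {x y n : ℤ} (h : (x : ℝ) / y ≠ n) :
    1 / |(y : ℝ)| ≤ |(x : ℝ) / y - n| := by
  rcases eq_or_ne y 0 with rfl | hy
  · simp
  have hy' : (y : ℝ) ≠ 0 := Int.cast_ne_zero.mpr hy
  have hxy : x - n * y ≠ 0 := by
    contrapose! h
    rw [div_eq_iff hy']
    exact_mod_cast sub_eq_zero.mp h
  have h1 : (1 : ℝ) ≤ |((x - n * y : ℤ) : ℝ)| := by exact_mod_cast Int.one_le_abs hxy
  rw [show (x : ℝ) / y - n = ((x - n * y : ℤ) : ℝ) / y by push_cast; field_simp, abs_div]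
  gcongr

lemma Set.Ioo_disjoint_Ioo_of_le {α : Type*} [Preorder α] {a b c d : α} (h : b ≤ c) :
    Disjoint (Ioo a b) (Ioo c d) :=
  (Ioc_disjoint_Ioc_of_le h).mono Ioo_subset_Ioc_self Ioo_subset_Ioc_self

lemma mem_Ioo_or_mem_Ioo_or_mem_Ioo {α : Type*} [Preorder α] {a b c d e f r : α}
    (ha : a < r) (hbc : r < b ∨ c < r) (hde : r < d ∨ e < r) (hf : r < f) :
    r ∈ Ioo a b ∨ r ∈ Ioo c d ∨ r ∈ Ioo e f := by
  rcases hbc with hb | hc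
  · exact .inl ⟨ha, hb⟩
  rcases hde with hd | he
  · exact .inr (.inl ⟨hc, hd⟩)
  · exact .inr (.inr ⟨he, hf⟩)

section Bounds

variable {T r E : ℝ}

lemma thueForm_lt_of_below_first_root (hT : 10 ≤ T) (hr : r ≤ -1.13 / T^5) :
    thueForm T r < -1/8 := by
  have hT5 : 0 < T^5 := by positivity
  have hrT : r * T^5 ≤ -1.13 := (le_div_iff₀ hT5).mp hr
  have hr₀ : r < 0 := by nlinarith
  have hT3 : (1000 : ℝ) ≤ T^3 := le_trans (by norm_num) (pow_le_pow_left₀ (by norm_num) hT 3)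
  have hT4 : 1000 * T ≤ T^4 := by nlinarith
  have hP : T * (T^4 - 2*T) ≤ (r - T) * (r - (T^4 - 2*T)) := by
    nlinarith [mul_nonneg (neg_nonneg.mpr hr₀.le) (show 0 ≤ T + (T^4 - 2*T) - r by linarith)]
  have hg : r * (r - T) * (r - (T^4 - 2*T)) ≤ r * (T * (T^4 - 2*T)) := by
    rw [mul_assoc]; exact mul_le_mul_of_nonpos_left hP hr₀.le
  have : r * (T * (T^4 - 2*T)) * T^3 < -9/8 * T^3 := by
    nlinarith [mul_nonpos_of_nonpos_of_nonneg (show r * T^5 + 1.13 ≤ 0 by linarith)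
      (show 0 ≤ T^3 - 2 by linarith)]
  unfold thueForm
  nlinarith

lemma lt_thueForm_of_between_first_roots (hT : 10 ≤ T) (hE₀ : 0 ≤ E) (hE₁ : E < 1)
    (h₁ : (-1 + E) / T^5 ≤ r) (h₂ : r ≤ T + (1 - E) / T^5) : E < thueForm T r := by
  have hT5 : 0 < T^5 := by positivity
  have hT3 : (1000 : ℝ) ≤ T^3 := le_trans (by norm_num) (pow_le_pow_left₀ (by norm_num) hT 3)
  have hT4 : 1000 * T ≤ T^4 := by nlinarith
  have hδ : (1 - E) / T^5 ≤ 1 / T^5 := by gcongr; linarith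
  suffices -(1 - E) < r * (r - T) * (r - (T^4 - 2*T)) by unfold thueForm; linarith
  rcases lt_or_ge r 0 with hr₀ | hr₀
  · have hr : -r ≤ (1 - E) / T^5 := by
      rw [show (-1 + E) / T^5 = -((1 - E) / T^5) by ring] at h₁; linarith
    have hrT : -r * T^5 ≤ 1 := by nlinarith [(le_div_iff₀ hT5).mp hr]
    rw [show r * (r - T) * (r - (T^4 - 2*T)) = -r * -((r - T) * (r - (T^4 - 2*T))) by ring]
    refine neg_lt_mul_of_le_div hT5 (by linarith) (by linarith) hr ?_
    have hr₄ : -r * T^4 ≤ 1 := le_trans (mul_le_mul_of_nonneg_left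
      (pow_le_pow_right₀ (by linarith) (by norm_num)) (by linarith)) hrT
    nlinarith
  rcases le_or_gt r T with hrT | hrT
  · nlinarith [mul_nonneg hr₀ (mul_nonneg_of_nonpos_of_nonpos (sub_nonpos.mpr hrT)
      (show r - (T^4 - 2*T) ≤ 0 by nlinarith))]
  · have hr : r - T ≤ (1 - E) / T^5 := by linarith
    rw [mul_comm r, mul_assoc]
    refine neg_lt_mul_of_le_div hT5 (by linarith) (by linarith) hr ?_
    have hs : (r - T) * T^5 ≤ 1 := by nlinarith [(le_div_iff₀ hT5).mp (hr.trans hδ)]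
    nlinarith [mul_nonneg (sub_nonneg.mpr hrT.le) (show 0 ≤ 4 * T + (r - T) by linarith)]

lemma lt_thueForm_of_beyond_last_root (hT : 10 ≤ T) (hE₀ : 0 ≤ E) (hE₁ : E < 1)
    (h : T^4 - 2*T - (1 - E) / T^8 ≤ r) : E < thueForm T r := by
  have hT8 : 0 < T^8 := by positivity
  have hT3 : (1000 : ℝ) ≤ T^3 := le_trans (by norm_num) (pow_le_pow_left₀ (by norm_num) hT 3)
  have hT4 : 1000 * T ≤ T^4 := by nlinarith
  have hδ : (1 - E) / T^8 ≤ 1 := by rw [div_le_one hT8]; nlinarith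
  suffices -(1 - E) < r * (r - T) * (r - (T^4 - 2*T)) by unfold thueForm; linarith
  rcases le_or_gt (T^4 - 2*T) r with hrM | hrM
  · nlinarith [mul_nonneg (mul_nonneg (show 0 ≤ r by nlinarith) (show 0 ≤ r - T by nlinarith))
      (sub_nonneg.mpr hrM)]
  · have hr : T^4 - 2*T - r ≤ (1 - E) / T^8 := by linarith
    rw [show r * (r - T) * (r - (T^4 - 2*T)) = (T^4 - 2*T - r) * -(r * (r - T)) by ring]
    refine neg_lt_mul_of_le_div hT8 (by linarith) (by linarith) hr ?_
    nlinarith [mul_lt_mul'' hrM (show r - T < T^4 - 2*T - T by linarith) (by nlinarith)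
      (by nlinarith)]

lemma thueForm_lt_of_near_middle_root (hT : 10 ≤ T) (h₁ : T + 1.13 / T^5 ≤ r)
    (h₂ : r ≤ 2 * T) : thueForm T r < -1/8 := by
  have hT5 : 0 < T^5 := by positivity
  have hT3 : (1000 : ℝ) ≤ T^3 := le_trans (by norm_num) (pow_le_pow_left₀ (by norm_num) hT 3)
  have hδ : 0 < 1.13 / T^5 := by positivity
  have hs : 1.13 ≤ (r - T) * T^5 := (div_le_iff₀ hT5).mp (by linarith)
  have hP : T * (r - T) * (T^4 - 4*T) ≤ r * (r - T) * (T^4 - 2*T - r) := by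
    apply mul_le_mul (mul_le_mul_of_nonneg_right (by linarith) (by linarith)) (by linarith)
      (by nlinarith) (by nlinarith)
  have : 9/8 * T^3 < T * (r - T) * (T^4 - 4*T) * T^3 := by
    nlinarith [mul_le_mul_of_nonneg_right hs (show 0 ≤ T^3 - 4 by linarith)]
  unfold thueForm
  nlinarith

lemma thueForm_lt_of_far_from_roots (hT : 10 ≤ T) (h₁ : 2 * T ≤ r)
    (h₂ : r ≤ T^4 - 2*T - 1/2) : thueForm T r < -1/8 := by
  have hP : 2 * T * T * (1/2) ≤ r * (r - T) * (T^4 - 2*T - r) := by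
    apply mul_le_mul (mul_le_mul h₁ (by linarith) (by linarith) (by linarith)) (by linarith)
      (by norm_num) (by nlinarith)
  unfold thueForm
  nlinarith

lemma thueForm_lt_of_near_last_root (hT : 10 ≤ T) (h₁ : T^4 - 2*T - 1/2 ≤ r)
    (h₂ : r ≤ T^4 - 2*T - 1.13 / T^8) : thueForm T r < -1/27 := by
  have hT8 : 0 < T^8 := by positivity
  have hT3 : (1000 : ℝ) ≤ T^3 := le_trans (by norm_num) (pow_le_pow_left₀ (by norm_num) hT 3)
  have hT4 : 1000 * T ≤ T^4 := by nlinarith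
  have hs : 1.13 ≤ (T^4 - 2*T - r) * T^8 := (div_le_iff₀ hT8).mp (by linarith)
  have hP : 99/100 * T^4 * (99/100 * T^4) * (T^4 - 2*T - r) ≤ r * (r - T) * (T^4 - 2*T - r) := by
    apply mul_le_mul (mul_le_mul (by linarith) (by linarith) (by positivity) (by linarith))
      le_rfl (by nlinarith) (by nlinarith)
  unfold thueForm
  nlinarith

lemma thueForm_lt_of_between_last_roots (hT : 10 ≤ T) (h₁ : T + 1.13 / T^5 ≤ r)
    (h₂ : r ≤ T^4 - 2*T - 1.13 / T^8) :
    thueForm T r < -1/8 ∨ T^4 - 2*T - 1/2 < r ∧ thueForm T r < -1/27 := by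
  rcases le_total r (2 * T) with hr | hr
  · exact .inl (thueForm_lt_of_near_middle_root hT h₁ hr)
  rcases le_or_gt r (T^4 - 2*T - 1/2) with hr' | hr'
  · exact .inl (thueForm_lt_of_far_from_roots hT hr hr')
  · exact .inr ⟨hr', thueForm_lt_of_near_last_root hT hr'.le h₂⟩

lemma thue_intervals_disjoint (hT : 10 ≤ T) (hE : E ≤ 1) :
    Disjoint (Ioo (-1.13 / T^5) ((-1 + E) / T^5)) (Ioo (T + (1 - E) / T^5) (T + 1.13 / T^5)) ∧
    Disjoint (Ioo (-1.13 / T^5) ((-1 + E) / T^5))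
      (Ioo (T^4 - 2*T - 1.13 / T^8) (T^4 - 2*T - (1 - E) / T^8)) ∧
    Disjoint (Ioo (T + (1 - E) / T^5) (T + 1.13 / T^5))
      (Ioo (T^4 - 2*T - 1.13 / T^8) (T^4 - 2*T - (1 - E) / T^8)) := by
  have hT5 : 1 ≤ T^5 := one_le_pow₀ (by linarith)
  have hT8 : 1 ≤ T^8 := one_le_pow₀ (by linarith)
  have hT3 : (1000 : ℝ) ≤ T^3 := le_trans (by norm_num) (pow_le_pow_left₀ (by norm_num) hT 3)
  have hT4 : T + 3 ≤ T^4 - 2*T := by nlinarith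
  have h₁ : (-1 + E) / T^5 ≤ 0 := div_nonpos_of_nonpos_of_nonneg (by linarith) (by positivity)
  have h₂ : 0 ≤ (1 - E) / T^5 := div_nonneg (by linarith) (by positivity)
  have h₃ : 1.13 / T^5 ≤ 1.13 := div_le_self (by norm_num) hT5
  have h₄ : 1.13 / T^8 ≤ 1.13 := div_le_self (by norm_num) hT8
  exact ⟨Ioo_disjoint_Ioo_of_le (by linarith), Ioo_disjoint_Ioo_of_le (by linarith),
    Ioo_disjoint_Ioo_of_le (by linarith)⟩

end Bounds

lemma div_lt_or_lt_of_thueForm_ge {t x y : ℤ} (ht : 10 ≤ t) (hy : 2 ≤ |y|)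
    (hF : -(1 / |(y : ℝ)|^3) ≤ thueForm t (x / y)) :
    (x : ℝ) / y < t + 1.13 / (t : ℝ)^5 ∨ (t : ℝ)^4 - 2*t - 1.13 / (t : ℝ)^8 < x / y := by
  have hT : (10 : ℝ) ≤ t := by exact_mod_cast ht
  by_contra! hr
  rcases thueForm_lt_of_between_last_roots hT hr.1 hr.2 with hF₈ | ⟨hM, hF₂₇⟩
  · have hy₂ : (2 : ℝ) ≤ |(y : ℝ)| := by rw [← Int.cast_abs]; exact_mod_cast hy
    have : 1 / |(y : ℝ)|^3 ≤ 1 / 2^3 := by gcongr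
    linarith
  rcases (show |y| = 2 ∨ 3 ≤ |y| by omega) with hy | hy
  · have hlt : (x : ℝ) / y < ((t^4 - 2*t : ℤ) : ℝ) := by
      push_cast; linarith [show (0 : ℝ) < 1.13 / (t : ℝ)^8 by positivity]
    have hdist := Int.one_div_abs_le_abs_div_sub hlt.ne
    rw [abs_of_neg (sub_neg.mpr hlt), ← Int.cast_abs, hy] at hdist
    push_cast at hdist
    linarith
  · have hy₃ : (3 : ℝ) ≤ |(y : ℝ)| := by rw [← Int.cast_abs]; exact_mod_cast hy
    have : 1 / |(y : ℝ)|^3 ≤ 1 / 3^3 := by gcongr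
    linarith

theorem stmt9 (t x y : ℤ) (ht : 10 ≤ t) (hy : 2 ≤ |y|)
    (h : x^3 - (t^4 - t)*x^2*y + (t^5 - 2*t^2)*x*y^2 + y^3 = 1) :
    ((x:ℝ)/y ∈ Set.Ioo (-1.13/(t:ℝ)^5) ((-1 + 1/(|y|:ℝ)^3)/(t:ℝ)^5) ∨
     (x:ℝ)/y ∈ Set.Ioo ((t:ℝ) + (1 - 1/(|y|:ℝ)^3)/(t:ℝ)^5) ((t:ℝ) + 1.13/(t:ℝ)^5) ∨
     (x:ℝ)/y ∈ Set.Ioo ((t:ℝ)^4 - 2*t - 1.13/(t:ℝ)^8) ((t:ℝ)^4 - 2*t - (1 - 1/(|y|:ℝ)^3)/(t:ℝ)^8)) ∧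
    Disjoint (Set.Ioo (-1.13/(t:ℝ)^5) ((-1 + 1/(|y|:ℝ)^3)/(t:ℝ)^5))
      (Set.Ioo ((t:ℝ) + (1 - 1/(|y|:ℝ)^3)/(t:ℝ)^5) ((t:ℝ) + 1.13/(t:ℝ)^5)) ∧
    Disjoint (Set.Ioo (-1.13/(t:ℝ)^5) ((-1 + 1/(|y|:ℝ)^3)/(t:ℝ)^5))
      (Set.Ioo ((t:ℝ)^4 - 2*t - 1.13/(t:ℝ)^8) ((t:ℝ)^4 - 2*t - (1 - 1/(|y|:ℝ)^3)/(t:ℝ)^8)) ∧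
    Disjoint (Set.Ioo ((t:ℝ) + (1 - 1/(|y|:ℝ)^3)/(t:ℝ)^5) ((t:ℝ) + 1.13/(t:ℝ)^5))
      (Set.Ioo ((t:ℝ)^4 - 2*t - 1.13/(t:ℝ)^8) ((t:ℝ)^4 - 2*t - (1 - 1/(|y|:ℝ)^3)/(t:ℝ)^8)) := by
  have hT : (10 : ℝ) ≤ t := by exact_mod_cast ht
  have hy₂ : (2 : ℝ) ≤ |(y : ℝ)| := by rw [← Int.cast_abs]; exact_mod_cast hy
  have hy₀ : (y : ℝ) ≠ 0 := abs_pos.mp (by linarith)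
  have hE : 1 / |(y : ℝ)|^3 ≤ 1 / 2^3 := by gcongr
  have hF : |thueForm t (x / y)| ≤ 1 / |(y : ℝ)|^3 := by
    have h' : (x : ℝ)^3 - ((t : ℝ)^4 - t)*x^2*y + ((t : ℝ)^5 - 2*t^2)*x*y^2 + y^3 = 1 := by
      exact_mod_cast h
    rw [thueForm_div _ hy₀, h', abs_div, abs_one, abs_pow]
  obtain ⟨hF₁, hF₂⟩ := abs_le.mp hF
  have hE₀ : 0 ≤ 1 / |(y : ℝ)|^3 := by positivity
  refine ⟨mem_Ioo_or_mem_Ioo_or_mem_Ioo ?_ ?_ ?_ ?_,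
    thue_intervals_disjoint hT (by linarith)⟩
  · by_contra! hr
    linarith [thueForm_lt_of_below_first_root hT hr]
  · by_contra! hr
    linarith [lt_thueForm_of_between_first_roots hT hE₀ (by linarith) hr.1 hr.2]
  · exact div_lt_or_lt_of_thueForm_ge ht hy hF₁
  · by_contra! hr
    linarith [lt_thueForm_of_beyond_last_root hT hE₀ (by linarith) hr]
end
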